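/- arXiv:2003.05270 — 7 statements merged into one kernel-verified Lean document; each statement's English description precedes it below -/
import Mathlib

section
/- Let g, h : F(Σ) → F(Δ) be homomorphisms with h injective. Define H₀ = F(Σ) and H_{i+1} = g⁻¹(g(H_i) ∩ h(H_i)), and SD(g,h) = ∩_{i≥0} H_i. Then g(SD(g,h)) ≤ h(SD(g,h)), and SD(g,h) is the maximal subgroup K of F(Σ) (with respect to inclusion) satisfying g(K) ≤ h(K). -/
/-- The descending chain in the definition of the stable domain:
`H₀ = F(Σ)`, `H_{i+1} = g⁻¹(g(H_i) ∩ h(H_i))`. -/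
def SDChain {α β : Type} (g h : FreeGroup α →* FreeGroup β) : ℕ → Subgroup (FreeGroup α)
  | 0 => ⊤
  | i + 1 =>
      Subgroup.comap g (Subgroup.map g (SDChain g h i) ⊓ Subgroup.map h (SDChain g h i))

/-- The stable domain `SD(g,h) = ∩_{i≥0} H_i`. -/
def SD {α β : Type} (g h : FreeGroup α →* FreeGroup β) : Subgroup (FreeGroup α) :=
  ⨅ i, SDChain g h i

/- `g(H_{i+1}) ≤ h(H_i)` for every `i` gives `g(SD) ≤ ⨅ i, h(H_i)`, and injectivity of `h` lets `h`
commute with the intersection, so this is `h(SD)`. Conversely, if `g(K) ≤ h(K)`, then `K ≤ H_i`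
implies `g(K) ≤ g(H_i) ∩ h(H_i)`, i.e. `K ≤ H_{i+1}`; by induction `K` lies in every `H_i`. -/

namespace SD

variable {α β : Type} (g h : FreeGroup α →* FreeGroup β)

theorem map_SDChain_succ_le (i : ℕ) :
    (SDChain g h (i + 1)).map g ≤ (SDChain g h i).map h :=
  Subgroup.map_le_iff_le_comap.mpr (Subgroup.comap_mono inf_le_right)

theorem map_le_map (hinj : Function.Injective h) : (SD g h).map g ≤ (SD g h).map h := by
  rw [SD, Subgroup.map_iInf h hinj]
  exact le_iInf fun i =>
    (Subgroup.map_mono (iInf_le _ (i + 1))).trans (map_SDChain_succ_le g h i)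

variable {g h}

theorem le_SDChain {K : Subgroup (FreeGroup α)} (hK : K.map g ≤ K.map h) :
    ∀ i, K ≤ SDChain g h i
  | 0 => le_top
  | i + 1 => Subgroup.map_le_iff_le_comap.mp <|
      le_inf (Subgroup.map_mono (le_SDChain hK i))
        (hK.trans (Subgroup.map_mono (le_SDChain hK i)))

theorem le_SD {K : Subgroup (FreeGroup α)} (hK : K.map g ≤ K.map h) : K ≤ SD g h :=
  le_iInf (le_SDChain hK)

end SD

/-- if `h` is injective then `g(SD(g,h)) ≤ h(SD(g,h))` and `SD(g,h)` is the
maximal subgroup `K` of `F(Σ)` with `g(K) ≤ h(K)`. -/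
theorem stmt_1 {α β : Type} (g h : FreeGroup α →* FreeGroup β)
    (hinj : Function.Injective h) :
    Subgroup.map g (SD g h) ≤ Subgroup.map h (SD g h) ∧
    ∀ K : Subgroup (FreeGroup α), Subgroup.map g K ≤ Subgroup.map h K → K ≤ SD g h :=
  ⟨SD.map_le_map g h hinj, fun _ => SD.le_SD⟩
end

section
/- Let A and B be inert subgroups of a free group F. Then A ∩ B is inert in F. -/
/-- `rkLe H n` : the (free) subgroup `H` has rank at most `n`. -/
def rkLe {G : Type*} [Group G] (H : Subgroup G) (n : ℕ) : Prop :=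
  ∃ S : Finset G, S.card ≤ n ∧ Subgroup.closure (S : Set G) = H

/-- A subgroup `H` of a free group is inert if `rk(H ∩ K) ≤ rk(K)` for every `K`. -/
def Inert {G : Type*} [Group G] (H : Subgroup G) : Prop :=
  ∀ K : Subgroup G, ∀ n : ℕ, rkLe K n → rkLe (H ⊓ K) n

theorem Inert.inf {G : Type*} [Group G] {A B : Subgroup G} (hA : Inert A) (hB : Inert B) :
    Inert (A ⊓ B) := by
  intro K n hK
  rw [inf_assoc]
  exact hA (B ⊓ K) n (hB K n hK)

/-- the intersection of two inert subgroups of a free group is inert. -/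
theorem stmt_4 {α : Type} (A B : Subgroup (FreeGroup α))
    (hA : Inert A) (hB : Inert B) : Inert (A ⊓ B) :=
  hA.inf hB
end

section
/- Let {A_i}_{i∈ℕ} be a countable family of inert subgroups of a free group F(Σ). Then the intersection ∩_{i=0}^∞ A_i is inert in F(Σ). -/
theorem List.exists_sublist_isChain_prod_eq {M : Type*} [Monoid M] (l : List M) :
    ∃ l' : List M, l'.Sublist l ∧ l'.IsChain (fun a b => a * b ≠ 1) ∧ l'.prod = l.prod := by
  induction h : l.length using Nat.strong_induction_on generalizing l with
  | _ n ih =>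
  by_cases hc : l.IsChain (fun a b => a * b ≠ 1)
  · exact ⟨l, List.Sublist.refl l, hc, rfl⟩
  obtain ⟨a, b, l₁, l₂, rfl, hab⟩ : ∃ a b l₁ l₂, l = l₁ ++ a :: b :: l₂ ∧ a * b = 1 := by
    simpa [List.isChain_iff_forall_rel_of_append_cons_cons] using hc
  have hlen : (l₁ ++ l₂).length < n := by
    simp only [List.length_append, List.length_cons] at h ⊢
    omega
  obtain ⟨l', hl', hc', hp⟩ := ih _ hlen (l₁ ++ l₂) rfl
  refine ⟨l', hl'.trans ((List.Sublist.refl l₁).append ?_), hc', ?_⟩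
  · exact (List.sublist_cons_self b l₂).trans (List.sublist_cons_self a _)
  · simp [hp, ← mul_assoc, hab]

theorem List.eq_of_map_eq_of_injOn {β γ : Type*} {f : β → γ} {s : Set β} (hf : Set.InjOn f s)
    {l l' : List β} (hl : ∀ x ∈ l, x ∈ s) (hl' : ∀ x ∈ l', x ∈ s) (h : l.map f = l'.map f) :
    l = l' := by
  have hlen : l.length = l'.length := by simpa using congrArg List.length h
  refine List.ext_getElem hlen fun i h₁ h₂ => hf (hl _ (getElem_mem _)) (hl' _ (getElem_mem _)) ?_
  have := List.getElem_of_eq h (by simpa using h₁)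
  rwa [List.getElem_map, List.getElem_map] at this

theorem Nat.ofDigits_reverse_lt_of_lt {b : ℕ} (hb : 1 < b) {D D' : List ℕ}
    (hlen : D.length = D'.length) (hD : ∀ d ∈ D, d < b) (hlt : D < D') :
    Nat.ofDigits b D.reverse < Nat.ofDigits b D'.reverse := by
  induction D generalizing D' with
  | nil => exact absurd hlt (by simp [List.length_eq_zero_iff.1 hlen.symm])
  | cons a D ih =>
    obtain ⟨a', D', rfl⟩ := List.exists_cons_of_length_eq_add_one hlen.symm
    simp only [List.reverse_cons, Nat.ofDigits_append, Nat.ofDigits_singleton, List.length_reverse]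
    simp only [List.length_cons, Nat.add_right_cancel_iff] at hlen
    rcases List.cons_lt_cons_iff.1 hlt with haa' | ⟨rfl, hDD'⟩
    · have hD₀ := Nat.ofDigits_lt_base_pow_length hb (l := D.reverse)
        fun d hd => hD d (List.mem_cons_of_mem a (List.mem_reverse.1 hd))
      rw [List.length_reverse] at hD₀
      calc Nat.ofDigits b D.reverse + b ^ D.length * a < b ^ D.length * (a + 1) := by
            rw [mul_add]; omega
        _ ≤ b ^ D'.length * a' := by rw [hlen]; exact Nat.mul_le_mul_left _ haa'
        _ ≤ _ := Nat.le_add_left _ _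
    · have := ih hlen (fun d hd => hD d (List.mem_cons_of_mem a hd)) hDD'
      rw [← hlen]
      omega

theorem Nat.ofDigits_reverse_append_lt {b : ℕ} (hb : 1 < b) {D D' : List ℕ}
    (hlen : D.length = D'.length) (hD : ∀ d ∈ D, d < b) (hlt : D < D') (E : List ℕ) :
    Nat.ofDigits b (D ++ E).reverse < Nat.ofDigits b (D' ++ E).reverse := by
  simp only [List.reverse_append, Nat.ofDigits_append, List.length_reverse]
  have := Nat.ofDigits_reverse_lt_of_lt hb hlen hD hlt
  have hpos : 0 < b ^ E.length := pow_pos (by omega) _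
  gcongr

theorem Set.inv_mem_union_inv {G : Type*} [InvolutiveInv G] {s : Set G} {x : G}
    (hx : x ∈ s ∪ s⁻¹) : x⁻¹ ∈ s ∪ s⁻¹ := by
  rwa [← Set.mem_inv, Set.union_inv, inv_inv, Set.union_comm]

theorem Subgroup.mem_closure_of_mem_union_inv {G : Type*} [Group G] {s : Set G} {x : G}
    (hx : x ∈ s ∪ s⁻¹) : x ∈ Subgroup.closure s := by
  rcases hx with hx | hx
  · exact Subgroup.subset_closure hx
  · exact inv_mem_iff.1 (Subgroup.subset_closure hx)

theorem Subgroup.closure_insert_erase_eq {G : Type*} [Group G] [DecidableEq G] {U : Finset G}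
    {v z : G} (hz : z ∈ Subgroup.closure (U : Set G))
    (hv' : v ∈ Subgroup.closure (insert z (U.erase v) : Set G)) :
    Subgroup.closure (insert z (U.erase v) : Set G) = Subgroup.closure (U : Set G) := by
  refine le_antisymm ((Subgroup.closure_le _).2 ?_) ((Subgroup.closure_le _).2 fun x hx => ?_)
  · rintro x (rfl | hx)
    · exact hz
    · exact Subgroup.subset_closure (Finset.mem_of_mem_erase hx)
  · by_cases hxv : x = v
    · exact hxv ▸ hv'
    · exact Subgroup.subset_closure (Set.mem_insert_of_mem _ (Finset.mem_erase.2 ⟨hxv, hx⟩))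

theorem Finset.exists_eq_of_monotone_card_le {β : Type*} {W : ℕ → Finset β} (hW : Monotone W)
    {n : ℕ} (hn : ∀ L, (W L).card ≤ n) : ∃ L₀, ∀ L ≥ L₀, W L = W L₀ := by
  have hbdd : BddAbove (Set.range fun L => (W L).card) := ⟨n, by rintro _ ⟨L, rfl⟩; exact hn L⟩
  obtain ⟨L₀, hL₀⟩ := Nat.sSup_mem (Set.range_nonempty _) hbdd
  refine ⟨L₀, fun L hL => (Finset.eq_of_subset_of_card_le (hW hL) ?_).symm⟩
  rw [show (W L₀).card = _ from hL₀]
  exact le_csSup hbdd ⟨L, rfl⟩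

theorem iInf_biInf_range_succ {β : Type*} [CompleteLattice β] (f : ℕ → β) :
    ⨅ m, ⨅ i ∈ Finset.range (m + 1), f i = ⨅ i, f i :=
  le_antisymm (le_iInf fun i => (iInf_le _ i).trans (biInf_le _ (Finset.self_mem_range_succ i)))
    (le_iInf fun _ => le_iInf₂ fun i _ => iInf_le _ i)

theorem rkLe_iInf_of_mem_closure_filter {G : Type*} [Group G] [DecidableEq G]
    {B : ℕ → Subgroup G} (hB : Antitone B) {n : ℕ} (U : ℕ → Finset G)
    (hU : ∀ m, Subgroup.closure (U m : Set G) = B m) (hcard : ∀ m, (U m).card ≤ n) (f : G → ℕ)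
    (hfin : ∀ L, ∃ F : Finset G, ∀ m, ∀ u ∈ U m, f u ≤ L → u ∈ F)
    (hgen : ∀ m, ∀ x ∈ B m, x ∈ Subgroup.closure ((U m).filter (f · ≤ f x) : Set G)) :
    rkLe (⨅ m, B m) n := by
  have hlim : ∀ L, ∃ W, ∀ᶠ m in Filter.hyperfilter ℕ, (U m).filter (f · ≤ L) = W := by
    intro L
    obtain ⟨F, hF⟩ := hfin L
    obtain ⟨W, -, hW⟩ := (Ultrafilter.eventually_exists_mem_iff
      (P := fun W m => (U m).filter (f · ≤ L) = W) (F.powerset : Set (Finset G)).toFinite).1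
      (Filter.Eventually.of_forall fun m => ⟨_, Finset.mem_powerset.2 fun u hu =>
        hF m u (Finset.mem_filter.1 hu).1 (Finset.mem_filter.1 hu).2, rfl⟩)
    exact ⟨W, hW⟩
  choose W hW using hlim
  have hWmono : Monotone W := fun L L' hLL' => by
    obtain ⟨m, hm, hm'⟩ := ((hW L).and (hW L')).exists
    rw [← hm, ← hm']
    intro u hu
    simp only [Finset.mem_filter] at hu ⊢
    exact ⟨hu.1, hu.2.trans hLL'⟩
  have hWcard : ∀ L, (W L).card ≤ n := fun L => by
    obtain ⟨m, hm⟩ := (hW L).exists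
    exact hm ▸ (Finset.card_filter_le _ _).trans (hcard m)
  have hWB : ∀ L, (W L : Set G) ⊆ (⨅ m, B m : Subgroup G) :=
    fun L x hx => Subgroup.mem_iInf.2 fun m₀ => by
    obtain ⟨m, hm, hm₀⟩ :=
      ((hW L).and (Nat.hyperfilter_le_atTop (Filter.eventually_ge_atTop m₀))).exists
    refine hB hm₀ (hU m ▸ Subgroup.subset_closure ?_)
    exact Finset.mem_of_mem_filter _ (hm ▸ hx : x ∈ (U m).filter (f · ≤ L))
  obtain ⟨L₀, hL₀⟩ := Finset.exists_eq_of_monotone_card_le hWmono hWcard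
  refine ⟨W L₀, hWcard L₀, le_antisymm ((Subgroup.closure_le _).2 (hWB L₀)) fun x hx => ?_⟩
  obtain ⟨m, hm⟩ := (hW (max (f x) L₀)).exists
  rw [← hL₀ _ (le_max_right _ _), ← hm]
  refine Subgroup.closure_mono ?_ (hgen m x (Subgroup.mem_iInf.1 hx m))
  intro u hu
  simp only [Finset.coe_filter, Set.mem_ofPred_eq] at hu ⊢
  exact ⟨hu.1, hu.2.trans (le_max_left _ _)⟩

namespace FreeGroup

variable {α : Type*}

theorem exists_append_invRev_of_isReduced {X Y : List (α × Bool)} (hX : IsReduced X)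
    (hY : IsReduced Y) : ∃ P T S, X = P ++ invRev T ∧ Y = T ++ S ∧ IsReduced (P ++ S) := by
  induction Y generalizing X with
  | nil => exact ⟨X, [], [], by simp [invRev], by simp, by simpa using hX⟩
  | cons y Y ih =>
    rcases X.eq_nil_or_concat with rfl | ⟨X, x, rfl⟩
    · exact ⟨[], [], y :: Y, by simp [invRev], by simp, by simpa using hY⟩
    rw [List.concat_eq_append] at hX ⊢
    by_cases hxy : x = (y.1, !y.2)
    · obtain ⟨P, T, S, rfl, rfl, hPS⟩ :=
        ih (X := X) (hX.infix ⟨[], [x], by simp⟩) (hY.infix ⟨[y], [], by simp⟩)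
      exact ⟨P, y :: T, S, by simp [hxy, invRev], rfl, hPS⟩
    · refine ⟨X ++ [x], [], y :: Y, by simp [invRev], rfl, ?_⟩
      refine IsReduced.append_overlap (L₂ := [x]) (by simpa using hX) ?_ (by simp)
      refine isReduced_cons_cons.2 ⟨fun h₁ => ?_, hY⟩
      by_contra h₂
      exact hxy (Prod.ext h₁ (by cases hx : x.2 <;> cases hy : y.2 <;> simp_all))

theorem ne_invRev_of_isReduced_append {l r : List (α × Bool)} (h : IsReduced (l ++ r))
    (hr : r ≠ []) : l ≠ invRev r := by
  obtain ⟨a, r, rfl⟩ := List.exists_cons_of_ne_nil hr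
  rintro rfl
  have := h.infix ⟨invRev r, r, by simp [invRev]⟩ (L₁ := [(a.1, !a.2), a])
  simp at this

variable [DecidableEq α]

local notation:max U "±" => ((U : Set (FreeGroup α)) ∪ (U : Set (FreeGroup α))⁻¹)

theorem toWord_mul_eq {x y : FreeGroup α} {P T S : List (α × Bool)}
    (hx : x.toWord = P ++ invRev T) (hy : y.toWord = T ++ S) (hPS : IsReduced (P ++ S)) :
    (x * y).toWord = P ++ S := by
  have hred : Red (x.toWord ++ y.toWord) (P ++ S) := by
    rw [hx, hy, List.append_assoc, ← List.append_assoc (invRev T)]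
    refine Red.append_append Red.refl ?_
    have hT : Red (invRev T ++ T) [] := reduce_invRev_left_cancel (L := T) ▸ reduce.red
    simpa using Red.append_append hT (Red.refl (L := S))
  rw [toWord_mul, reduce.eq_of_red hred, hPS.reduce_eq]

theorem exists_toWord_mul (x y : FreeGroup α) :
    ∃ P T S, x.toWord = P ++ invRev T ∧ y.toWord = T ++ S ∧ (x * y).toWord = P ++ S := by
  obtain ⟨P, T, S, hx, hy, hPS⟩ :=
    exists_append_invRev_of_isReduced (isReduced_toWord (x := x)) (isReduced_toWord (x := y))
  exact ⟨P, T, S, hx, hy, toWord_mul_eq hx hy hPS⟩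

-- `x = a c a⁻¹` with `c` cyclically reduced, so `|x| = 2|a| + |c|` and `|x * x| = 2|a| + 2|c|`.
theorem norm_le_norm_mul_self (x : FreeGroup α) : x.norm ≤ (x * x).norm := by
  have hx := congrArg List.length (reduceCyclically.conj_conjugator_reduceCyclically x.toWord)
  rw [← pow_two, norm, norm, toWord_pow,
    reduceCyclically.reduce_flatten_replicate isReduced_toWord 2]
  simp only [OfNat.ofNat_ne_zero, ↓reduceIte, List.reduceReplicate, List.flatten_cons,
    List.flatten_nil, List.append_nil, List.length_append, invRev_length] at hx ⊢
  omega

theorem norm_eq_length_of_toWord_eq {x : FreeGroup α} {w : List (α × Bool)}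
    (h : x.toWord = w) : x.norm = w.length :=
  congrArg List.length h

structure IsNielsenReduced (S : Set (FreeGroup α)) : Prop where
  one_notMem : (1 : FreeGroup α) ∉ S
  norm_le_norm_mul_left : ∀ u ∈ S, ∀ v ∈ S, u * v ≠ 1 → u.norm ≤ (u * v).norm
  norm_le_norm_mul_right : ∀ u ∈ S, ∀ v ∈ S, u * v ≠ 1 → v.norm ≤ (u * v).norm
  /-- the letters of `v` cancelled on its two sides in `u * v * w` do not exhaust `v` -/
  norm_add_norm_lt : ∀ u ∈ S, ∀ v ∈ S, ∀ w ∈ S, u * v ≠ 1 → v * w ≠ 1 →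
    u.norm + w.norm < (u * v).norm + (v * w).norm

/-- The reduced word of `x` is some `q` followed by the word of `u` with its first `c ≤ |q|`
letters cancelled, and no `w ∈ S` with `u * w ≠ 1` cancels the remaining `|u| - c` letters. -/
def RetainsTail (S : Set (FreeGroup α)) (x u : FreeGroup α) : Prop :=
  ∃ q c, x.toWord = q ++ u.toWord.drop c ∧ c ≤ q.length ∧ c ≤ u.norm ∧
    ∀ w ∈ S, u * w ≠ 1 → 2 * c + w.norm < (u * w).norm + u.norm

section

variable {S : Set (FreeGroup α)} {x u v : FreeGroup α}

theorem RetainsTail.norm_le (h : RetainsTail S x u) : u.norm ≤ x.norm := by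
  obtain ⟨q, c, hx, hcq, hcu, -⟩ := h
  have hu : u.toWord.length = u.norm := rfl
  simp only [norm_eq_length_of_toWord_eq hx, List.length_append, List.length_drop, hu]
  omega

namespace IsNielsenReduced

variable (hS : IsNielsenReduced S)
include hS

theorem retainsTail_self (hu : u ∈ S) : RetainsTail S u u := by
  refine ⟨[], 0, by simp, le_rfl, Nat.zero_le _, fun w hw huw => ?_⟩
  have hu1 : u.norm ≠ 0 := fun h => hS.one_notMem (norm_eq_zero.1 h ▸ hu)
  have := hS.norm_le_norm_mul_right u hu w hw huw
  omega

theorem retainsTail_mul (h : RetainsTail S x v) (hv : v ∈ S) (hu : u ∈ S) (hvu : v * u ≠ 1) :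
    RetainsTail S (x * u) u ∧ x.norm ≤ (x * u).norm := by
  obtain ⟨q, c, hx, hcq, hcv, hlt⟩ := h
  obtain ⟨P, T, R, hvW, huW, hvuW⟩ := exists_toWord_mul v u
  have hvL := norm_eq_length_of_toWord_eq hvW
  have huL := norm_eq_length_of_toWord_eq huW
  have hvuL := norm_eq_length_of_toWord_eq hvuW
  simp only [List.length_append, invRev_length] at hvL huL hvuL
  have hTR := hS.norm_le_norm_mul_left v hv u hu hvu
  have hTP := hS.norm_le_norm_mul_right v hv u hu hvu
  have hcP := hlt u hu hvu
  have hxw : x.toWord = (q ++ P.drop c) ++ invRev T := by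
    rw [hx, hvW, List.drop_append_of_le_length (by omega), List.append_assoc]
  -- `hcP` gives `c < P.length`: a nonempty part of `v` separates `q` from `R`
  have hred : IsReduced (q ++ P.drop c ++ R) := by
    refine IsReduced.append_overlap ?_ ?_
      (List.ne_nil_of_length_pos (by simp only [List.length_drop]; omega))
    · exact (isReduced_toWord (x := x)).infix ⟨[], invRev T, by rw [hxw]; simp⟩
    · exact (isReduced_toWord (x := v * u)).infix ⟨P.take c, [], by
      rw [hvuW, List.append_nil, ← List.append_assoc, List.take_append_drop]⟩
  have hxu := toWord_mul_eq hxw huW hred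
  have hx' := norm_eq_length_of_toWord_eq hxw
  have hxu' := norm_eq_length_of_toWord_eq hxu
  simp only [List.length_append, List.length_drop, invRev_length] at hx' hxu'
  refine ⟨⟨q ++ P.drop c, T.length, ?_, ?_, by omega, fun w hw huw' => ?_⟩, by omega⟩
  · rw [hxu, huW, List.drop_left]
  · simp only [List.length_append, List.length_drop]
    omega
  · have := hS.norm_add_norm_lt v hv u hu w hw hvu huw'
    omega

theorem retainsTail_prod {l : List (FreeGroup α)} (hne : l ≠ []) (hl : ∀ x ∈ l, x ∈ S)
    (hc : l.IsChain (fun a b => a * b ≠ 1)) :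
    RetainsTail S l.prod (l.getLast hne) ∧ ∀ x ∈ l, x.norm ≤ l.prod.norm := by
  induction l using List.reverseRecOn with
  | nil => exact absurd rfl hne
  | append_singleton l u ih =>
    have hu : u ∈ S := hl u (by simp)
    rcases eq_or_ne l [] with rfl | hl₀
    · simpa using hS.retainsTail_self hu
    obtain ⟨ih₁, ih₂⟩ := ih hl₀ (fun x hx => hl x (by simp [hx])) (List.isChain_append.1 hc).1
    have hvu : l.getLast hl₀ * u ≠ 1 :=
      (List.isChain_append.1 hc).2.2 _ (List.getLast_mem_getLast? hl₀) u rfl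
    obtain ⟨h₁, h₂⟩ := hS.retainsTail_mul ih₁ (hl _ (by simp [List.getLast_mem])) hu hvu
    simp only [List.prod_append, List.prod_singleton, List.getLast_append_singleton]
    refine ⟨h₁, fun x hx => ?_⟩
    rcases List.mem_append.1 hx with hx | hx
    · exact (ih₂ x hx).trans h₂
    · exact List.mem_singleton.1 hx ▸ h₁.norm_le

theorem mem_closure_norm_le (hx : x ∈ Submonoid.closure S) :
    x ∈ Submonoid.closure {s ∈ S | s.norm ≤ x.norm} := by
  obtain ⟨l, hlS, rfl⟩ := Submonoid.exists_list_of_mem_closure hx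
  obtain ⟨l', hl', hc, hp⟩ := l.exists_sublist_isChain_prod_eq
  rw [← hp]
  rcases eq_or_ne l' [] with rfl | hne
  · exact one_mem _
  refine Submonoid.list_prod_mem _ fun y hy => Submonoid.subset_closure ⟨hlS y (hl'.subset hy), ?_⟩
  exact (hS.retainsTail_prod hne (fun y hy => hlS y (hl'.subset hy)) hc).2 y hy

end IsNielsenReduced

theorem IsNielsenReduced.mem_closure_filter_norm_le {U : Finset (FreeGroup α)}
    (hU : IsNielsenReduced (U±)) (hx : x ∈ Subgroup.closure (U : Set (FreeGroup α))) :
    x ∈ Subgroup.closure (U.filter (·.norm ≤ x.norm) : Set (FreeGroup α)) := by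
  rw [← Subgroup.mem_toSubmonoid, Subgroup.closure_toSubmonoid] at hx ⊢
  refine Submonoid.closure_mono ?_ (hU.mem_closure_norm_le hx)
  rintro s ⟨hs | hs, hsx⟩
  · exact Or.inl (by simpa using ⟨hs, hsx⟩)
  · exact Or.inr (by simpa using ⟨hs, hsx⟩)

end

def lettersIn (Λ : Set α) : Subgroup (FreeGroup α) where
  carrier := {x | ∀ p ∈ x.toWord, p.1 ∈ Λ}
  mul_mem' {x y} hx hy p hp :=
    (List.mem_append.1 ((toWord_mul_sublist x y).subset hp)).elim (hx p) (hy p)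
  one_mem' p hp := by simp at hp
  inv_mem' {x} hx p hp := by
    rw [toWord_inv, invRev, List.mem_reverse, List.mem_map] at hp
    obtain ⟨q, hq, rfl⟩ := hp
    exact hx q hq

theorem exists_closure_le_lettersIn (S : Finset (FreeGroup α)) :
    ∃ Λ : Finset α, Subgroup.closure (S : Set (FreeGroup α)) ≤ lettersIn Λ := by
  refine ⟨S.biUnion fun s => (s.toWord.map Prod.fst).toFinset, (Subgroup.closure_le _).2 ?_⟩
  intro s hs p hp
  simp only [Finset.coe_biUnion, Finset.mem_coe, Set.mem_iUnion, List.coe_toFinset,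
    Set.mem_ofPred_eq, List.mem_map]
  exact ⟨s, hs, p, hp, rfl⟩

theorem finite_norm_le_lettersIn (Λ : Finset α) (L : ℕ) :
    {x : FreeGroup α | x.norm ≤ L ∧ x ∈ lettersIn Λ}.Finite := by
  set s : Finset (α × Bool) := Λ ×ˢ Finset.univ
  have hwords : {w : List (α × Bool) | w.length ≤ L ∧ ∀ p ∈ w, p ∈ s}.Finite := by
    refine ((List.finite_length_le s L).image (List.map Subtype.val)).subset ?_
    rintro w ⟨hw, hs⟩
    lift w to List s using hs
    exact ⟨w, by simpa using hw, rfl⟩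
  refine (hwords.preimage toWord_injective.injOn).subset fun x ⟨hx, hΛ⟩ => ⟨hx, fun p hp => ?_⟩
  simpa [s] using hΛ p hp

def halfValue (b : ℕ) (key : α × Bool → ℕ) (w : List (α × Bool)) : ℕ :=
  Nat.ofDigits b ((w.take ((w.length + 1) / 2)).map key).reverse

/-- With digits `key p < b`, `halfValue` compares initial halves of equally long words
lexicographically, so this is Nielsen's tie-break between elements of the same length. -/
def tieBreak (b : ℕ) (key : α × Bool → ℕ) (x : FreeGroup α) : ℕ :=
  halfValue b key x.toWord + halfValue b key x⁻¹.toWord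

theorem tieBreak_inv (b : ℕ) (key : α × Bool → ℕ) (x : FreeGroup α) :
    tieBreak b key x⁻¹ = tieBreak b key x := by
  rw [tieBreak, tieBreak, inv_inv, add_comm]

theorem tieBreak_lt_tieBreak {b : ℕ} (hb : 1 < b) {key : α × Bool → ℕ} (hkey : ∀ p, key p < b)
    {x x' : FreeGroup α} {A A' C : List (α × Bool)} (hx : x.toWord = A ++ C)
    (hx' : x'.toWord = A' ++ C) (hlen : A.length = A'.length) (hAC : A.length ≤ C.length)
    (hlt : A.map key < A'.map key) : tieBreak b key x < tieBreak b key x' := by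
  have hhalf : ∀ {A : List (α × Bool)}, A.length ≤ C.length →
      A.length ≤ (A.length + C.length + 1) / 2 ∧ (A.length + C.length + 1) / 2 ≤ C.length :=
    fun h => ⟨by omega, by omega⟩
  have hinv : ∀ {y : FreeGroup α} {A : List (α × Bool)}, y.toWord = A ++ C →
      A.length ≤ C.length → halfValue b key y⁻¹.toWord =
        Nat.ofDigits b (((invRev C).take ((A.length + C.length + 1) / 2)).map key).reverse := by
    intro y A hy hA
    have hlen' : (invRev C ++ invRev A).length = A.length + C.length := by
      simp [invRev_length, add_comm]
    rw [halfValue, toWord_inv, hy, invRev_append, hlen',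
      List.take_append_of_le_length (by simpa [invRev_length] using (hhalf hA).2)]
  have hfwd : ∀ {y : FreeGroup α} {A : List (α × Bool)}, y.toWord = A ++ C →
      A.length ≤ C.length → halfValue b key y.toWord = Nat.ofDigits b
        (A.map key ++ (C.take ((A.length + C.length + 1) / 2 - A.length)).map key).reverse := by
    intro y A hy hA
    rw [halfValue, hy, List.length_append, List.take_append, List.take_of_length_le (hhalf hA).1,
      List.map_append]
  rw [tieBreak, tieBreak, hfwd hx hAC, hfwd hx' (hlen ▸ hAC), hinv hx hAC, hinv hx' (hlen ▸ hAC),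
    ← hlen]
  have := Nat.ofDigits_reverse_append_lt hb (by simpa using hlen)
    (by simp only [List.mem_map]; rintro _ ⟨p, -, rfl⟩; exact hkey p)
    hlt ((C.take ((A.length + C.length + 1) / 2 - A.length)).map key)
  omega

def complexity (t : FreeGroup α → ℕ) (U : Finset (FreeGroup α)) : ℕ ×ₗ ℕ ×ₗ ℕ :=
  toLex (∑ u ∈ U, u.norm, toLex (U.card, ∑ u ∈ U, t u))

def IsMinimal (t : FreeGroup α → ℕ) (U : Finset (FreeGroup α)) : Prop :=
  ∀ U' : Finset (FreeGroup α), Subgroup.closure (U' : Set (FreeGroup α)) =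
    Subgroup.closure (U : Set (FreeGroup α)) → U'.card ≤ U.card →
      ¬ complexity t U' < complexity t U

variable {t : FreeGroup α → ℕ} {U : Finset (FreeGroup α)}

theorem complexity_insert_erase_lt {v z : FreeGroup α} (hv : v ∈ U)
    (hlt : z.norm < v.norm ∨ z.norm = v.norm ∧ t z < t v) :
    complexity t (insert z (U.erase v)) < complexity t U := by
  have hnorm := Finset.sum_erase_add U FreeGroup.norm hv
  have ht := Finset.sum_erase_add U t hv
  have hcard := Finset.card_erase_add_one hv
  simp only [complexity, Prod.Lex.toLex_lt_toLex]
  by_cases hz : z ∈ U.erase v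
  · rw [Finset.insert_eq_of_mem hz]
    omega
  · rw [Finset.sum_insert hz, Finset.sum_insert hz, Finset.card_insert_of_notMem hz]
    omega

theorem exists_complexity_lt_of_mem {v y z : FreeGroup α} (hv : v ∈ U)
    (hy : y ∈ U±) (hyv : y ≠ v) (hyv' : y ≠ v⁻¹)
    (hz : z ∈ Subgroup.closure (U : Set (FreeGroup α))) (hvz : v = y * z ∨ v = z * y)
    (hlt : z.norm < v.norm ∨ z.norm = v.norm ∧ t z < t v) :
    ∃ U' : Finset (FreeGroup α), Subgroup.closure (U' : Set (FreeGroup α)) =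
      Subgroup.closure (U : Set (FreeGroup α)) ∧ U'.card ≤ U.card ∧
        complexity t U' < complexity t U := by
  set U' := insert z (U.erase v)
  have hyU' : y ∈ Subgroup.closure (U' : Set (FreeGroup α)) := by
    rcases hy with hy | hy
    · exact Subgroup.subset_closure (by simp [U', hyv, hy])
    · refine inv_mem_iff.1 (Subgroup.subset_closure ?_)
      simp [U', Set.mem_inv.1 hy, inv_eq_iff_eq_inv.not.2 hyv']
  have hzU' : z ∈ Subgroup.closure (U' : Set (FreeGroup α)) :=
    Subgroup.subset_closure (by simp [U'])
  have hvU' : v ∈ Subgroup.closure (U' : Set (FreeGroup α)) := by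
    rcases hvz with rfl | rfl
    · exact mul_mem hyU' hzU'
    · exact mul_mem hzU' hyU'
  refine ⟨U', ?_, ?_, complexity_insert_erase_lt hv hlt⟩
  · simpa [U'] using Subgroup.closure_insert_erase_eq hz (by simpa [U'] using hvU')
  · exact (Finset.card_insert_le _ _).trans (Finset.card_erase_add_one hv).le

theorem exists_complexity_lt (ht : ∀ x, t x⁻¹ = t x) {v y z : FreeGroup α}
    (hv : v ∈ U±) (hy : y ∈ U±) (hyv : y ≠ v) (hyv' : y ≠ v⁻¹)
    (hz : z ∈ Subgroup.closure (U : Set (FreeGroup α))) (hvz : v = y * z ∨ v = z * y)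
    (hlt : z.norm < v.norm ∨ z.norm = v.norm ∧ t z < t v) :
    ∃ U' : Finset (FreeGroup α), Subgroup.closure (U' : Set (FreeGroup α)) =
      Subgroup.closure (U : Set (FreeGroup α)) ∧ U'.card ≤ U.card ∧
        complexity t U' < complexity t U := by
  rcases hv with hv | hv
  · exact exists_complexity_lt_of_mem hv hy hyv hyv' hz hvz hlt
  · refine exists_complexity_lt_of_mem hv (Set.inv_mem_union_inv hy) (inv_injective.ne hyv)
      (by rwa [inv_inv, ne_eq, inv_eq_iff_eq_inv]) (inv_mem hz) ?_ (by simpa [norm_inv_eq, ht])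
    rcases hvz with rfl | rfl <;> simp

theorem IsMinimal.norm_le_of_eq_mul (hU : IsMinimal t U) (ht : ∀ x, t x⁻¹ = t x)
    {v y z : FreeGroup α} (hv : v ∈ U±) (hy : y ∈ U±) (hyv : y ≠ v) (hyv' : y ≠ v⁻¹)
    (hz : z ∈ Subgroup.closure (U : Set (FreeGroup α))) (hvz : v = y * z ∨ v = z * y) :
    v.norm ≤ z.norm ∧ (v.norm = z.norm → t v ≤ t z) := by
  by_contra h
  obtain ⟨U', h₁, h₂, h₃⟩ := exists_complexity_lt ht hv hy hyv hyv' hz hvz (by omega)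
  exact hU U' h₁ h₂ h₃

theorem IsMinimal.one_notMem (hU : IsMinimal t U) : (1 : FreeGroup α) ∉ U := by
  intro h1
  refine hU (U.erase 1) ?_ (Finset.card_erase_le) ?_
  · refine le_antisymm (Subgroup.closure_mono (by simp)) ((Subgroup.closure_le _).2 fun x hx => ?_)
    by_cases hx1 : x = 1
    · rw [hx1]
      exact one_mem _
    · exact Subgroup.subset_closure (Finset.mem_erase.2 ⟨hx1, hx⟩)
  · have hnorm := Finset.sum_erase_add U FreeGroup.norm h1
    have hcard := Finset.card_erase_add_one h1
    simp only [complexity, Prod.Lex.toLex_lt_toLex, norm_one] at hnorm ⊢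
    omega

theorem IsMinimal.norm_le_norm_mul_right (hU : IsMinimal t U) (ht : ∀ x, t x⁻¹ = t x)
    {u v : FreeGroup α} (hu : u ∈ U±) (hv : v ∈ U±) (huv : u * v ≠ 1) :
    v.norm ≤ (u * v).norm := by
  by_cases h : u = v
  · exact h ▸ norm_le_norm_mul_self u
  refine (hU.norm_le_of_eq_mul ht hv (Set.inv_mem_union_inv hu) ?_ (inv_injective.ne h)
    (mul_mem (Subgroup.mem_closure_of_mem_union_inv hu) (Subgroup.mem_closure_of_mem_union_inv hv))
    (Or.inl (by group))).1
  rintro rfl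
  exact huv (by group)

theorem IsMinimal.norm_le_norm_mul_left (hU : IsMinimal t U) (ht : ∀ x, t x⁻¹ = t x)
    {u v : FreeGroup α} (hu : u ∈ U±) (hv : v ∈ U±) (huv : u * v ≠ 1) :
    u.norm ≤ (u * v).norm := by
  have := hU.norm_le_norm_mul_right ht (Set.inv_mem_union_inv hv) (Set.inv_mem_union_inv hu)
    (by rwa [← mul_inv_rev, ne_eq, inv_eq_one])
  rwa [← mul_inv_rev, norm_inv_eq, norm_inv_eq] at this

theorem exists_toWord_of_norm_mul_add_norm_mul_le {u v w : FreeGroup α}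
    (hu : u.norm ≤ (u * v).norm) (hv₁ : v.norm ≤ (u * v).norm) (hv₂ : v.norm ≤ (v * w).norm)
    (hw : w.norm ≤ (v * w).norm) (h : (u * v).norm + (v * w).norm ≤ u.norm + w.norm) :
    ∃ P l r t, u.toWord = P ++ invRev l ∧ v.toWord = l ++ r ∧ w.toWord = invRev r ++ t ∧
      (u * v).toWord = P ++ r ∧ (v * w).toWord = l ++ t ∧ l.length = r.length ∧
      l.length ≤ P.length ∧ l.length ≤ t.length := by
  obtain ⟨P, l, r, hu', hv', huv'⟩ := exists_toWord_mul u v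
  obtain ⟨l', r', t, hv'', hw', hvw'⟩ := exists_toWord_mul v w
  have := norm_eq_length_of_toWord_eq hu'
  have := norm_eq_length_of_toWord_eq hv'
  have := norm_eq_length_of_toWord_eq hv''
  have := norm_eq_length_of_toWord_eq hw'
  have := norm_eq_length_of_toWord_eq huv'
  have := norm_eq_length_of_toWord_eq hvw'
  simp only [List.length_append, invRev_length] at *
  obtain ⟨hl, hr⟩ := List.append_inj (hv'.symm.trans hv'') (by omega)
  subst hl
  refine ⟨P, l, r, t, hu', hv', by rw [hw', hr, invRev_invRev], huv', hvw', by omega, by omega,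
    by omega⟩

theorem tieBreak_mul_lt_or {b : ℕ} (hb : 1 < b) {key : α × Bool → ℕ} (hkey : ∀ p, key p < b)
    {Λ : Set α} (hinj : Set.InjOn key {p | p.1 ∈ Λ}) {u v w : FreeGroup α} (hvΛ : v ∈ lettersIn Λ)
    {P l r t : List (α × Bool)} (hu : u.toWord = P ++ invRev l) (hv : v.toWord = l ++ r)
    (hw : w.toWord = invRev r ++ t) (huv : (u * v).toWord = P ++ r) (hvw : (v * w).toWord = l ++ t)
    (hlr : l.length = r.length) (hlP : l.length ≤ P.length) (hlt : l.length ≤ t.length)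
    (hne : l ≠ invRev r) :
    tieBreak b key (v * w) < tieBreak b key w ∨ tieBreak b key (u * v) < tieBreak b key u := by
  have hl : ∀ p ∈ l, p ∈ {p : α × Bool | p.1 ∈ Λ} := fun p hp => hvΛ p (by simp [hv, hp])
  have hr : ∀ p ∈ invRev r, p ∈ {p : α × Bool | p.1 ∈ Λ} :=
    fun p hp => (lettersIn Λ).inv_mem hvΛ p (by simp [toWord_inv, hv, invRev_append, hp])
  rcases lt_or_gt_of_ne fun h => hne (List.eq_of_map_eq_of_injOn hinj hl hr h) with h | h
  · exact Or.inl (tieBreak_lt_tieBreak hb hkey hvw hw (by simpa [invRev_length] using hlr) hlt h)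
  · right
    rw [← tieBreak_inv, ← tieBreak_inv b key u]
    refine tieBreak_lt_tieBreak hb hkey (C := invRev P) ?_ ?_
      (by simpa [invRev_length] using hlr.symm) (by simpa [invRev_length, ← hlr] using hlP) h
    · rw [toWord_inv, huv, invRev_append]
    · rw [toWord_inv, hu, invRev_append, invRev_invRev]

theorem IsMinimal.norm_add_norm_lt {b : ℕ} {key : α × Bool → ℕ} (hU : IsMinimal (tieBreak b key) U)
    (hb : 1 < b) (hkey : ∀ p, key p < b) {Λ : Set α} (hinj : Set.InjOn key {p | p.1 ∈ Λ})
    (hUΛ : Subgroup.closure (U : Set (FreeGroup α)) ≤ lettersIn Λ) {u v w : FreeGroup α}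
    (hu : u ∈ U±) (hv : v ∈ U±) (hw : w ∈ U±) (huv : u * v ≠ 1) (hvw : v * w ≠ 1) :
    u.norm + w.norm < (u * v).norm + (v * w).norm := by
  have ht := tieBreak_inv b key
  have huv₁ := hU.norm_le_norm_mul_left ht hu hv huv
  have huv₂ := hU.norm_le_norm_mul_right ht hu hv huv
  have hvw₁ := hU.norm_le_norm_mul_left ht hv hw hvw
  have hvw₂ := hU.norm_le_norm_mul_right ht hv hw hvw
  by_contra! h
  obtain ⟨P, l, r, t, hu', hv', hw', huv', hvw', hlr, hlP, hlt⟩ :=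
    exists_toWord_of_norm_mul_add_norm_mul_le huv₁ huv₂ hvw₁ hvw₂ h
  have hv1 : v.norm ≠ 0 := fun h0 =>
    hU.one_notMem (by simpa [norm_eq_zero.1 h0] using hv)
  have hne : l ≠ invRev r := ne_invRev_of_isReduced_append (hv' ▸ isReduced_toWord)
    (List.ne_nil_of_length_pos (by
      have := norm_eq_length_of_toWord_eq hv'
      rw [List.length_append] at this
      omega))
  have hvU := Subgroup.mem_closure_of_mem_union_inv hv
  rcases tieBreak_mul_lt_or hb hkey hinj (hUΛ hvU) hu' hv' hw' huv' hvw' hlr hlP hlt hne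
    with hlt' | hlt'
  · have hv_ne_w : v ≠ w := by
      rintro rfl
      exact hne (List.append_inj (hv'.symm.trans hw') (by simp [invRev_length, hlr])).1
    have := hU.norm_le_of_eq_mul ht hw (Set.inv_mem_union_inv hv)
      (fun h => hvw (by rw [← h, mul_inv_cancel]))
      (inv_injective.ne hv_ne_w) (mul_mem hvU (Subgroup.mem_closure_of_mem_union_inv hw))
      (Or.inl (by group))
    omega
  · have hu_ne_v : u ≠ v := by
      rintro rfl
      have hPl : P.length = l.length := by
        simpa [invRev_length, hlr] using congrArg List.length (hu'.symm.trans hv')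
      have := (List.append_inj (hu'.symm.trans hv') hPl).2
      exact hne (by rw [← this, invRev_invRev])
    have := hU.norm_le_of_eq_mul ht hu (Set.inv_mem_union_inv hv)
      (fun h => huv (by rw [← h, inv_mul_cancel]))
      (inv_injective.ne hu_ne_v.symm) (mul_mem (Subgroup.mem_closure_of_mem_union_inv hu) hvU)
      (Or.inr (by group))
    omega

theorem IsMinimal.isNielsenReduced {b : ℕ} {key : α × Bool → ℕ}
    (hU : IsMinimal (tieBreak b key) U) (hb : 1 < b) (hkey : ∀ p, key p < b) {Λ : Set α}
    (hinj : Set.InjOn key {p | p.1 ∈ Λ})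
    (hUΛ : Subgroup.closure (U : Set (FreeGroup α)) ≤ lettersIn Λ) :
    IsNielsenReduced (U±) where
  one_notMem h := hU.one_notMem (by simpa using h)
  norm_le_norm_mul_left _ hu _ hv huv := hU.norm_le_norm_mul_left (tieBreak_inv b key) hu hv huv
  norm_le_norm_mul_right _ hu _ hv huv := hU.norm_le_norm_mul_right (tieBreak_inv b key) hu hv huv
  norm_add_norm_lt _ hu _ hv _ hw huv hvw :=
    hU.norm_add_norm_lt hb hkey hinj hUΛ hu hv hw huv hvw

theorem exists_isNielsenReduced (S : Finset (FreeGroup α)) :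
    ∃ U : Finset (FreeGroup α), Subgroup.closure (U : Set (FreeGroup α)) =
      Subgroup.closure (S : Set (FreeGroup α)) ∧ U.card ≤ S.card ∧
        IsNielsenReduced (U±) := by
  obtain ⟨Λ, hΛ⟩ := exists_closure_le_lettersIn S
  set letters := (Λ ×ˢ (Finset.univ : Finset Bool)).toList
  set b := letters.length + 2
  set t := tieBreak b letters.idxOf
  set admissible := {U : Finset (FreeGroup α) | Subgroup.closure (U : Set (FreeGroup α)) =
    Subgroup.closure (S : Set (FreeGroup α)) ∧ U.card ≤ S.card}
  have hS : S ∈ admissible := ⟨rfl, le_rfl⟩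
  set U := Function.argminOn (complexity t) admissible ⟨S, hS⟩
  obtain ⟨hU₁, hU₂⟩ : U ∈ admissible := Function.argminOn_mem _ _ _
  have hmin : IsMinimal t U := fun U' h₁ h₂ =>
    Function.not_lt_argminOn _ _ (show U' ∈ admissible from ⟨h₁.trans hU₁, h₂.trans hU₂⟩)
  refine ⟨U, hU₁, hU₂, hmin.isNielsenReduced (by omega)
    (fun p => List.idxOf_le_length.trans_lt (by omega)) (Λ := Λ) ?_ (hU₁ ▸ hΛ)⟩
  intro p hp q _ hpq
  exact (List.idxOf_inj (by simpa [letters] using hp)).1 hpq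

theorem rkLe_iInf_of_antitone {B : ℕ → Subgroup (FreeGroup α)} (hB : Antitone B) {n : ℕ}
    (h : ∀ m, rkLe (B m) n) : rkLe (⨅ m, B m) n := by
  obtain ⟨S₀, -, hS₀⟩ := h 0
  obtain ⟨Λ, hΛ⟩ := exists_closure_le_lettersIn S₀
  have hN : ∀ m, ∃ U : Finset (FreeGroup α), Subgroup.closure (U : Set (FreeGroup α)) = B m ∧
      U.card ≤ n ∧ IsNielsenReduced (U±) := by
    intro m
    obtain ⟨S, hS, hSB⟩ := h m
    obtain ⟨U, h₁, h₂, h₃⟩ := exists_isNielsenReduced S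
    exact ⟨U, h₁.trans hSB, h₂.trans hS, h₃⟩
  choose U hU hcard hN using hN
  refine rkLe_iInf_of_mem_closure_filter hB U hU hcard norm (fun L => ?_)
    fun m x hx => (hN m).mem_closure_filter_norm_le ((hU m).symm ▸ hx)
  refine ⟨(finite_norm_le_lettersIn Λ L).toFinset, fun m u hu hL => ?_⟩
  refine (Set.Finite.mem_toFinset _).2 ⟨hL, hΛ ?_⟩
  rw [hS₀]
  exact hB (Nat.zero_le m) (hU m ▸ Subgroup.subset_closure hu)

end FreeGroup

theorem Inert.inf_s5 {G : Type*} [Group G] {H H' : Subgroup G} (hH : Inert H) (hH' : Inert H') :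
    Inert (H ⊓ H') := fun K n hK => inf_assoc H H' K ▸ hH _ n (hH' K n hK)

theorem inert_top {G : Type*} [Group G] : Inert (⊤ : Subgroup G) := fun K n hK => by
  rwa [top_inf_eq]

theorem Inert.finset_biInf {G ι : Type*} [Group G] (s : Finset ι) {A : ι → Subgroup G}
    (h : ∀ i ∈ s, Inert (A i)) : Inert (⨅ i ∈ s, A i) := by
  classical
  induction s using Finset.induction_on with
  | empty => simpa using inert_top
  | insert a s _ ih =>
    rw [Finset.iInf_insert]
    exact (h a (Finset.mem_insert_self a s)).inf_s5 (ih fun i hi => h i (Finset.mem_insert_of_mem hi))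

/-- a countable intersection of inert subgroups of a free group is inert. -/
theorem stmt_5 {α : Type} (A : ℕ → Subgroup (FreeGroup α))
    (hA : ∀ i, Inert (A i)) : Inert (⨅ i, A i) := by
  classical
  intro K n hK
  have hB : Antitone fun m => (⨅ i ∈ Finset.range (m + 1), A i) ⊓ K := fun m m' hm =>
    inf_le_inf_right K (biInf_mono fun i hi => by simp only [Finset.mem_range] at hi ⊢; omega)
  have hrk : ∀ m, rkLe ((⨅ i ∈ Finset.range (m + 1), A i) ⊓ K) n := fun m =>
    Inert.finset_biInf _ (fun i _ => hA i) K n hK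
  simpa only [← iInf_inf, iInf_biInf_range_succ] using FreeGroup.rkLe_iInf_of_antitone hB hrk
end

section
/- Inertness is transitive: if A ≤ B ≤ C are free groups with A inert in B and B inert in C, then A is inert in C. -/
/-- `A` is inert in the subgroup `B`: `rk(A ∩ K) ≤ rk(K)` for every subgroup `K ≤ B`. -/
def InertIn {G : Type*} [Group G] (A B : Subgroup G) : Prop :=
  ∀ K : Subgroup G, K ≤ B → ∀ n : ℕ, rkLe K n → rkLe (A ⊓ K) n

theorem InertIn.inert {G : Type*} [Group G] {A B : Subgroup G} (hAB : A ≤ B)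
    (hA : InertIn A B) (hB : Inert B) : Inert A := by
  intro K n hK
  have hABK : A ⊓ (B ⊓ K) = A ⊓ K := by rw [← inf_assoc, inf_eq_left.mpr hAB]
  simpa only [hABK] using hA (B ⊓ K) inf_le_left n (hB K n hK)

/-- inertness is transitive: if `A ≤ B ≤ C` with `A` inert in `B` and `B`
inert in `C`, then `A` is inert in `C`. (Here `C = FreeGroup γ` is the ambient group.) -/
theorem stmt_6 {γ : Type} (A B : Subgroup (FreeGroup γ)) (hAB : A ≤ B)
    (h1 : InertIn A B) (h2 : Inert B) : Inert A :=
  h1.inert hAB h2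
end

section
/- Let F be a free group and x, y ∈ F with x^n = y^n for some n ≥ 1. Then x = y. -/
/-- roots are unique in free groups: if `x^n = y^n` with `n ≥ 1` then
`x = y`. -/
theorem stmt_12 {α : Type} (x y : FreeGroup α) (n : ℕ) (hn : 1 ≤ n)
    (hxy : x ^ n = y ^ n) : x = y :=
  pow_left_injective (Nat.one_le_iff_ne_zero.mp hn) hxy
end

section
/- For the homomorphisms g, h : F(x,y) → F(a,b) defined by g(x) = ab, g(y) = 1, h(x) = a², h(y) = b², the stable domain SD(g,h) equals ker(g), which is a nontrivial normal subgroup of infinite index in F(x,y) and hence not finitely generated. -/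
/-- `g : F(x,y) → F(a,b)`, `x ↦ ab`, `y ↦ 1`.  (`x, a` are `of true`; `y, b` are
`of false`.) -/
def gEx : FreeGroup Bool →* FreeGroup Bool :=
  FreeGroup.lift (fun s => if s then FreeGroup.of true * FreeGroup.of false else 1)

/-- `h : F(x,y) → F(a,b)`, `x ↦ a²`, `y ↦ b²`. -/
def hEx : FreeGroup Bool →* FreeGroup Bool :=
  FreeGroup.lift (fun s => if s then FreeGroup.of true ^ 2 else FreeGroup.of false ^ 2)

/-!
`gEx` factors as `w ↦ (ab)^σ(w)` through the `x`-exponent sum `σ`, and `ab` has infinite order,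
so `im g` is infinite cyclic (infinite index) and `ker g = ker σ`. Sending `a, b` to the two
generating reflections of the infinite dihedral group kills `im h = ⟨a², b²⟩` but maps `ab` to a
translation, so `im g ∩ im h = 1`; hence `H_{i+1} = ker g` for every `i`.

`ker σ` is not finitely generated: map `F(x,y)` to the lamplighter group `ℤ ≀ ℤ` by sending `x` to
the generator of `ℤ` and `y` to the lamp at `0`. Then `ker σ` lands in the base `⊕_ℤ ℤ`, the
conjugate `x^n y x^{-n}` lights exactly the lamp at `n`, and finitely many elements of the base
only ever use finitely many lamps.
-/

section StableDomain

open Subgroup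

theorem SDChain_succ_eq_ker_of_range_inf_range_eq_bot {α β : Type}
    {g h : FreeGroup α →* FreeGroup β} (hgh : g.range ⊓ h.range = ⊥) (i : ℕ) :
    SDChain g h (i + 1) = g.ker := by
  have : map g (SDChain g h i) ⊓ map h (SDChain g h i) = ⊥ :=
    eq_bot_iff.mpr (hgh ▸ inf_le_inf (map_le_range _ _) (map_le_range _ _))
  rw [SDChain, this, MonoidHom.comap_bot]

theorem SD_eq_ker_of_range_inf_range_eq_bot {α β : Type} {g h : FreeGroup α →* FreeGroup β}
    (hgh : g.range ⊓ h.range = ⊥) : SD g h = g.ker := by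
  refine le_antisymm ?_ (le_iInf fun i => ?_)
  · exact (iInf_le _ 1).trans (SDChain_succ_eq_ker_of_range_inf_range_eq_bot hgh 0).le
  · cases i with
    | zero => exact le_top
    | succ i => exact (SDChain_succ_eq_ker_of_range_inf_range_eq_bot hgh i).ge

theorem zpowers_inf_ker_eq_bot_of_orderOf_eq_zero {G H : Type*} [Group G] [Group H]
    {f : G →* H} {a : G} (ha : orderOf (f a) = 0) : zpowers a ⊓ f.ker = ⊥ := by
  rw [eq_bot_iff]
  rintro _ ⟨⟨n, rfl⟩, hn⟩
  have hn : f a ^ n = 1 := by simpa using hn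
  rw [← orderOf_dvd_iff_zpow_eq_one, ha, Int.natCast_zero, zero_dvd_iff] at hn
  simp [hn]

end StableDomain

namespace Lamplighter

open Multiplicative

noncomputable def shift : Multiplicative ℤ →* MulAut (Multiplicative (ℤ →₀ ℤ)) where
  toFun n := (Finsupp.domCongr (Equiv.addRight n.toAdd)).toMultiplicative
  map_one' := by ext f k; simp [Equiv.Perm.one_def]
  map_mul' m n := by
    ext f k
    simp [AddMonoidHom.toMultiplicative_apply_apply, -Equiv.addRight_add]
    ring_nf

@[simp] theorem shift_ofAdd_single (n k c : ℤ) :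
    shift (ofAdd n) (ofAdd (Finsupp.single k c)) = ofAdd (Finsupp.single (k + n) c) := by
  simp [shift]

end Lamplighter

abbrev Lamplighter := Multiplicative (ℤ →₀ ℤ) ⋊[Lamplighter.shift] Multiplicative ℤ

namespace Lamplighter

open Multiplicative SemidirectProduct

noncomputable def baseSupported (A : Finset ℤ) : Subgroup Lamplighter :=
  (AddSubgroup.toSubgroup (Finsupp.supported ℤ ℤ (A : Set ℤ)).toAddSubgroup).map inl

theorem inl_mem_baseSupported {A : Finset ℤ} {f : Multiplicative (ℤ →₀ ℤ)} :
    inl f ∈ baseSupported A ↔ (toAdd f).support ⊆ A := by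
  rw [baseSupported, Subgroup.mem_map_iff_mem inl_injective]
  simp [Finsupp.mem_supported]

end Lamplighter

namespace StableDomainExample

open Multiplicative SemidirectProduct Subgroup

-- `F(x,y)` and `F(a,b)` are both `FreeGroup Bool`; the names record which side a word lives on.
abbrev x : FreeGroup Bool := FreeGroup.of true
abbrev y : FreeGroup Bool := FreeGroup.of false
abbrev a : FreeGroup Bool := FreeGroup.of true
abbrev b : FreeGroup Bool := FreeGroup.of false

def exponentSumX : FreeGroup Bool →* Multiplicative ℤ :=
  FreeGroup.lift fun s => if s then ofAdd 1 else 1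

def toDihedral : FreeGroup Bool →* DihedralGroup 0 :=
  FreeGroup.lift fun s => if s then DihedralGroup.sr 0 else DihedralGroup.sr 1

noncomputable def toLamplighter : FreeGroup Bool →* Lamplighter :=
  FreeGroup.lift fun s => if s then inr (ofAdd 1) else inl (ofAdd (Finsupp.single 0 1))

theorem toDihedral_comp_hEx : toDihedral.comp hEx = 1 := by
  ext s
  cases s <;> simp [toDihedral, hEx, sq]

theorem orderOf_toDihedral_ab : orderOf (toDihedral (a * b)) = 0 := by
  simp [toDihedral, DihedralGroup.sr_mul_sr, DihedralGroup.orderOf_r_one]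

theorem orderOf_ab : orderOf (a * b) = 0 :=
  Nat.eq_zero_of_zero_dvd (orderOf_toDihedral_ab ▸ orderOf_map_dvd toDihedral (a * b))

theorem gEx_eq_zpowersHom_comp : gEx = (zpowersHom _ (a * b)).comp exponentSumX := by
  ext s
  cases s <;> simp [gEx, exponentSumX]

theorem ker_gEx : gEx.ker = exponentSumX.ker := by
  rw [gEx_eq_zpowersHom_comp]
  refine MonoidHom.ker_comp_of_injective _ _ fun m n hmn => toAdd.injective ?_
  exact injective_zpow_iff_not_isOfFinOrder.mpr (orderOf_eq_zero_iff.mp orderOf_ab) hmn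

theorem range_gEx : gEx.range = zpowers (a * b) := by
  refine le_antisymm ?_ (zpowers_le.mpr ⟨x, by simp [gEx]⟩)
  rw [gEx_eq_zpowersHom_comp, MonoidHom.range_comp]
  exact map_le_range _ _

theorem range_gEx_inf_range_hEx : gEx.range ⊓ hEx.range = ⊥ := by
  refine eq_bot_iff.mpr ?_
  rw [range_gEx, ← zpowers_inf_ker_eq_bot_of_orderOf_eq_zero orderOf_toDihedral_ab]
  exact inf_le_inf_left _ ((MonoidHom.range_le_ker_iff _ _).mpr toDihedral_comp_hEx)

theorem ker_gEx_ne_bot : gEx.ker ≠ ⊥ := by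
  intro h
  have hy : y ∈ gEx.ker := by simp [gEx]
  rw [h, mem_bot] at hy
  exact FreeGroup.of_ne_one false hy

theorem index_ker_gEx : gEx.ker.index = 0 := by
  rw [index_ker, range_gEx, Nat.card_zpowers, orderOf_ab]

theorem rightHom_comp_toLamplighter : rightHom.comp toLamplighter = exponentSumX := by
  ext s
  cases s <;> simp [toLamplighter, exponentSumX]

theorem toLamplighter_conj_y (n : ℤ) :
    toLamplighter (x ^ n * y * (x ^ n)⁻¹) = inl (ofAdd (Finsupp.single n 1)) := by
  simp only [toLamplighter, map_mul, map_inv, map_zpow, FreeGroup.lift_apply_of, if_true,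
    Bool.false_eq_true, if_false, ← map_zpow inr, ← ofAdd_zsmul, smul_eq_mul, mul_one]
  rw [← map_inv, ← inl_aut, Lamplighter.shift_ofAdd_single, zero_add]

theorem not_fg_ker_exponentSumX : ¬ exponentSumX.ker.FG := by
  rintro ⟨S, hS⟩
  set A := S.biUnion fun s => (toAdd (toLamplighter s).left).support
  have hle : exponentSumX.ker ≤ (Lamplighter.baseSupported A).comap toLamplighter := by
    rw [← hS, closure_le]
    intro s hs
    have hs_ker : s ∈ exponentSumX.ker := hS ▸ subset_closure hs
    have hright : (toLamplighter s).right = 1 := by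
      rw [← rightHom_eq_right, ← MonoidHom.comp_apply, rightHom_comp_toLamplighter]
      exact hs_ker
    rw [SetLike.mem_coe, mem_comap, ← inl_left_mul_inr_right (toLamplighter s), hright, map_one,
      mul_one, Lamplighter.inl_mem_baseSupported]
    exact Finset.subset_biUnion_of_mem (fun s => (toAdd (toLamplighter s).left).support) hs
  obtain ⟨n, hn⟩ := Infinite.exists_notMem_finset A
  have hconj : x ^ n * y * (x ^ n)⁻¹ ∈ exponentSumX.ker :=
    exponentSumX.normal_ker.conj_mem y (by simp [exponentSumX]) _
  have hlamp := hle hconj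
  rw [mem_comap, toLamplighter_conj_y, Lamplighter.inl_mem_baseSupported] at hlamp
  exact hn (hlamp (by simp))

end StableDomainExample

/-- for these `g, h`, the stable domain `SD(g,h)` equals `ker g`, which is
a nontrivial normal subgroup of infinite index in `F(x,y)`, hence not finitely
generated. -/
theorem stmt_18 :
    SD gEx hEx = gEx.ker ∧ gEx.ker ≠ ⊥ ∧ gEx.ker.Normal ∧
    gEx.ker.index = 0 ∧ ¬ gEx.ker.FG := by
  refine ⟨SD_eq_ker_of_range_inf_range_eq_bot StableDomainExample.range_gEx_inf_range_hEx,
    StableDomainExample.ker_gEx_ne_bot, inferInstance, StableDomainExample.index_ker_gEx, ?_⟩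
  rw [StableDomainExample.ker_gEx]
  exact StableDomainExample.not_fg_ker_exponentSumX
end

section
/- Fix a class 𝒞 of free group homomorphisms that is closed under restrictions to finitely generated subgroups. Suppose that for all g, h : F(Σ) → F(Δ) in 𝒞 with h injective and Σ finite one has rk(Eq(g,h)) ≤ |Σ|. Then for all such g, h, the equaliser Eq(g,h) is an inert subgroup of F(Σ): for every subgroup K ≤ F(Σ), rk(Eq(g,h) ∩ K) ≤ rk(K). -/
universe u

open Cardinal

theorem FreeGroup.mk_le_card_of_closure_eq_top {γ : Type*} (S : Finset (FreeGroup γ))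
    (hS : Subgroup.closure (S : Set (FreeGroup γ)) = ⊤) : #γ ≤ S.card := by
  let ab : FreeGroup γ →* Multiplicative (FreeAbelianGroup γ) := Abelianization.of
  have hclosure : Subgroup.closure (ab '' S) = ⊤ := by
    rw [← MonoidHom.map_closure, hS]
    exact Subgroup.map_top_of_surjective _ QuotientGroup.mk_surjective
  have hspan : Submodule.span ℤ (Additive.ofMul '' (ab '' S)) = ⊤ := by
    rw [← Submodule.toAddSubgroup_inj, Submodule.span_int_eq_addSubgroupClosure,
      Equiv.image_eq_preimage_symm]
    exact (Subgroup.toAddSubgroup_closure _).symm.trans (congrArg _ hclosure)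
  calc #γ = #(Set.range (FreeAbelianGroup.basis γ)) :=
        (mk_range_eq _ (Module.Basis.injective _)).symm
    _ ≤ #(Additive.ofMul '' (ab '' S)) := (FreeAbelianGroup.basis γ).le_span hspan
    _ ≤ S.card := by
      refine mk_image_le.trans (mk_image_le.trans ?_)
      simp

theorem MonoidHom.map_eqLocus_comp {G H M : Type*} [Group G] [Group H] [Monoid M]
    (φ : H →* G) (g h : G →* M) :
    ((g.comp φ).eqLocus (h.comp φ)).map φ = g.eqLocus h ⊓ φ.range := by
  rw [inf_comm, ← Subgroup.map_comap_eq]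
  rfl

namespace rkLe

variable {G H : Type*} [Group G] [Group H] {K : Subgroup G} {m n : ℕ}

theorem mono (hK : rkLe K m) (hmn : m ≤ n) : rkLe K n :=
  let ⟨S, hS, hSK⟩ := hK
  ⟨S, hS.trans hmn, hSK⟩

theorem fg (hK : rkLe K n) : K.FG :=
  let ⟨S, _, hSK⟩ := hK
  ⟨S, hSK⟩

theorem map (f : G →* H) (hK : rkLe K n) : rkLe (K.map f) n := by
  classical
  obtain ⟨S, hS, rfl⟩ := hK
  refine ⟨S.image f, Finset.card_image_le.trans hS, ?_⟩
  rw [Finset.coe_image, MonoidHom.map_closure]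

theorem top_subtype (hK : rkLe K n) : rkLe (⊤ : Subgroup K) n := by
  classical
  obtain ⟨S, hS, rfl⟩ := hK
  refine ⟨S.preimage Subtype.val Subtype.val_injective.injOn, ?_, ?_⟩
  · rw [Finset.card_preimage]
    exact (Finset.card_filter_le _ _).trans hS
  · rw [Finset.coe_preimage]
    exact Subgroup.closure_closure_coe_preimage

end rkLe

theorem rkLe.exists_mulEquiv_freeGroup {G : Type u} [Group G] [IsFreeGroup G] {K : Subgroup G}
    {n : ℕ} (hK : rkLe K n) :
    ∃ (γ : Type u) (_ : Fintype γ) (_ : FreeGroup γ ≃* K), Fintype.card γ ≤ n := by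
  let e := IsFreeGroup.mulEquiv K
  obtain ⟨S, hS, htop⟩ : rkLe (⊤ : Subgroup (FreeGroup (IsFreeGroup.Generators K))) n := by
    rw [← Subgroup.map_top_of_surjective e.symm.toMonoidHom e.symm.surjective]
    exact hK.top_subtype.map _
  have hcard : #(IsFreeGroup.Generators K) ≤ n :=
    (FreeGroup.mk_le_card_of_closure_eq_top S htop).trans (by exact_mod_cast hS)
  have : Finite (IsFreeGroup.Generators K) :=
    lt_aleph0_iff_finite.mp (hcard.trans_lt natCast_lt_aleph0)
  obtain ⟨_⟩ := nonempty_fintype (IsFreeGroup.Generators K)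
  refine ⟨_, inferInstance, e, ?_⟩
  rwa [mk_fintype, Nat.cast_le] at hcard

/-- let `C` be a class of homomorphisms between free groups closed under
restriction to finitely generated subgroups (viewed as abstract free groups via any
isomorphism `FreeGroup γ ≃* K`).  If `rk(Eq(g,h)) ≤ |Σ|` whenever `g, h : F(Σ) → F(Δ)`
are in `C` with `h` injective and `Σ` finite, then each such `Eq(g,h)` is inert in
`F(Σ)`: `rk(Eq(g,h) ∩ K) ≤ rk(K)` for every subgroup `K`. -/
theorem stmt_19
    (C : ∀ (α β : Type), (FreeGroup α →* FreeGroup β) → Prop)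
    (hclosed : ∀ (α β : Type) (g : FreeGroup α →* FreeGroup β), C α β g →
      ∀ (K : Subgroup (FreeGroup α)), K.FG →
        ∀ (γ : Type) (e : FreeGroup γ ≃* ↥K),
          C γ β (g.comp (K.subtype.comp e.toMonoidHom)))
    (hrank : ∀ (α β : Type) [Fintype α] (g h : FreeGroup α →* FreeGroup β),
      C α β g → C α β h → Function.Injective h →
        rkLe (g.eqLocus h) (Fintype.card α)) :
    ∀ (α β : Type) [Fintype α] (g h : FreeGroup α →* FreeGroup β),
      C α β g → C α β h → Function.Injective h →
        ∀ (K : Subgroup (FreeGroup α)) (n : ℕ), rkLe K n → rkLe (g.eqLocus h ⊓ K) n := by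
  intro α β _ g h hg hh hinj K n hK
  obtain ⟨γ, _, e, hγ⟩ := hK.exists_mulEquiv_freeGroup
  set φ : FreeGroup γ →* FreeGroup α := K.subtype.comp e.toMonoidHom
  have hφ : Function.Injective φ := K.subtype_injective.comp e.injective
  have hrange : φ.range = K := by
    rw [MonoidHom.range_comp, MonoidHom.range_eq_top_of_surjective _ e.surjective,
      ← MonoidHom.range_eq_map, Subgroup.range_subtype]
  have hEq := hrank γ β (g.comp φ) (h.comp φ) (hclosed α β g hg K hK.fg γ e)
    (hclosed α β h hh K hK.fg γ e) (hinj.comp hφ)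
  rw [← hrange, ← MonoidHom.map_eqLocus_comp]
  exact (hEq.mono hγ).map φ
end
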